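/- arXiv:1302.1984 — 2 statements merged into one kernel-verified Lean document; each statement's English description precedes it below -/
import Mathlib

section
/- Let (M_i, ω_FS^i), i=1,...,r, be irreducible HSSCT with normalized canonical forms and a₁,...,a_r nonzero reals. Then the Hofer–Zehnder capacity satisfies c_HZ(M₁ × ... × M_r, a₁ω_FS¹ ⊕ ... ⊕ a_rω_FS^r) ≥ (|a₁| + ... + |a_r|)·π. -/
/-!
STATEMENT 11.  Let `(M_i, ω_FS^i)`, `i = 1, …, r`, be irreducible HSSCT with
normalized canonical forms and `a₁, …, a_r` nonzero reals.  Then the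
Hofer–Zehnder capacity satisfies
`c_HZ(M₁ × ⋯ × M_r, a₁ω_FS¹ ⊕ ⋯ ⊕ a_rω_FS^r) ≥ (|a₁| + ⋯ + |a_r|)·π`.
-/

noncomputable section

open scoped ENNReal BigOperators

/-- An abstract framework for symplectic geometry, axiomatizing (since Mathlib
has no symplectic geometry): symplectic manifolds (an object bundles a manifold
together with a symplectic form), symplectic embeddings, rescaling of the form,
(finite) products, the standard balls `B^{2n}(r)` and cylinders `Z^{2n}(r)`, the
Gromov width `cG` and the Hofer–Zehnder capacity `cHZ` with their standard
properties, homology classes, Liu–Tian Gromov–Witten invariants, Lu's pseudo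
symplectic capacities `C_HZ^{(2)}` and `C_HZ^{(2o)}` with Lu's estimates,
Hermitian symmetric spaces of compact type (HSSCT) and Cartan domains with the
symplectic embeddings between them (Di Scala–Loi symplectic duality,
`B^{2n}(1) ⊆ Ω`, `Ω ↪ Z^{2n}(1)`), the nonvanishing Gromov–Witten invariants of
HSSCT coming from their quantum cohomology, line bundles and Seshadri constants,
and the symplectic Lusternik–Schnirelmann category.  Fields record definitions
and the facts cited from the literature. -/
structure SympGeom where
  /-- symplectic manifolds (a manifold together with a symplectic form) -/
  Obj : Type 1
  /-- `emb M N`: there exists a symplectic embedding of `M` into `N` -/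
  emb : Obj → Obj → Prop
  emb_rfl : ∀ M, emb M M
  emb_trans : ∀ {a b c : Obj}, emb a b → emb b c → emb a c
  /-- rescaling the symplectic form: `smul a (M, ω) = (M, aω)` -/
  smul : ℝ → Obj → Obj
  smul_emb : ∀ (a : ℝ) {M N : Obj}, emb M N → emb (smul a M) (smul a N)
  /-- the product `(M × N, ω ⊕ τ)` -/
  prod : Obj → Obj → Obj
  prod_emb : ∀ {a b c d : Obj}, emb a c → emb b d → emb (prod a b) (prod c d)
  /-- finite products `(M₁ × ⋯ × M_r, ω₁ ⊕ ⋯ ⊕ ω_r)` -/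
  bprod : ∀ {r : ℕ}, (Fin r → Obj) → Obj
  bprod_emb : ∀ {r : ℕ} {f g : Fin r → Obj},
      (∀ i, emb (f i) (g i)) → emb (bprod f) (bprod g)
  bprod_succ : ∀ {r : ℕ} (f : Fin (r + 1) → Obj),
      bprod f = prod (bprod (Fin.init f)) (f (Fin.last r))
  /-- the real dimension (`2n` for complex dimension `n`) -/
  dim : Obj → ℕ
  dim_smul : ∀ (a : ℝ) (M : Obj), dim (smul a M) = dim M
  dim_prod : ∀ M N : Obj, dim (prod M N) = dim M + dim N
  dim_bprod : ∀ {r : ℕ} (f : Fin r → Obj), dim (bprod f) = ∑ i, dim (f i)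
  /-- the open ball `B^{2n}(r) ⊆ (ℝ^{2n}, ω₀)`; first argument the real dimension -/
  ball : ℕ → ℝ → Obj
  /-- the open cylinder `Z^{2n}(r) = {x₁² + y₁² < r²} ⊆ (ℝ^{2n}, ω₀)` -/
  cyl : ℕ → ℝ → Obj
  dim_ball : ∀ n r, dim (ball n r) = n
  dim_cyl : ∀ n r, dim (cyl n r) = n
  ball_emb_cyl : ∀ n r, emb (ball n r) (cyl n r)
  ball_emb_bprod : ∀ {r : ℕ} (n : Fin r → ℕ) (rad : ℝ),
      emb (ball (∑ i, n i) rad) (bprod fun i => ball (n i) rad)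
  /-- closed (compact without boundary) symplectic manifolds -/
  Closed : Obj → Prop
  closed_smul : ∀ (a : ℝ) {M : Obj}, a ≠ 0 → Closed M → Closed (smul a M)
  closed_prod : ∀ {M N : Obj}, Closed M → Closed N → Closed (prod M N)
  closed_bprod : ∀ {r : ℕ} {f : Fin r → Obj}, (∀ i, Closed (f i)) → Closed (bprod f)
  /-- the Gromov width -/
  cG : Obj → ℝ≥0∞
  cG_mono : ∀ {M N : Obj}, emb M N → cG M ≤ cG N
  cG_conf : ∀ (a : ℝ), a ≠ 0 → ∀ M, cG (smul a M) = ENNReal.ofReal |a| * cG M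
  cG_ball : ∀ (n : ℕ) (r : ℝ), 0 < n → 0 < r →
      cG (ball n r) = ENNReal.ofReal (Real.pi * r ^ 2)
  /-- nontriviality of the Gromov width on cylinders (Gromov's nonsqueezing) -/
  cG_cyl : ∀ (n : ℕ) (r : ℝ), 0 < n → 0 < r →
      cG (cyl n r) = ENNReal.ofReal (Real.pi * r ^ 2)
  /-- the Hofer–Zehnder capacity -/
  cHZ : Obj → ℝ≥0∞
  cHZ_mono : ∀ {M N : Obj}, emb M N → cHZ M ≤ cHZ N
  cHZ_conf : ∀ (a : ℝ), a ≠ 0 → ∀ M, cHZ (smul a M) = ENNReal.ofReal |a| * cHZ M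
  cHZ_ball : ∀ (n : ℕ) (r : ℝ), 0 < n → 0 < r →
      cHZ (ball n r) = ENNReal.ofReal (Real.pi * r ^ 2)
  cHZ_cyl : ∀ (n : ℕ) (r : ℝ), 0 < n → 0 < r →
      cHZ (cyl n r) = ENNReal.ofReal (Real.pi * r ^ 2)
  /-- the Gromov width is the smallest capacity -/
  cG_le_cHZ : ∀ M, cG M ≤ cHZ M
  /-- superadditivity of `cHZ` for products of compact manifolds (Lu, Lemma 4.3) -/
  cHZ_superadd : ∀ {M N : Obj}, Closed M → Closed N →
      cHZ M + cHZ N ≤ cHZ (prod M N)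
  /-- Lu's theorem: `c_HZ(N × B^{2n}(r), ω ⊕ ω₀) = πr²` for closed `N` -/
  cHZ_prod_ball : ∀ {N : Obj} (n : ℕ) (r : ℝ), Closed N → 0 < n → 0 < r →
      cHZ (prod N (ball n r)) = ENNReal.ofReal (Real.pi * r ^ 2)
  /-- Lu's theorem: `c_HZ(N × Z^{2n}(r), ω ⊕ ω₀) = πr²` for closed `N` -/
  cHZ_prod_cyl : ∀ {N : Obj} (n : ℕ) (r : ℝ), Closed N → 0 < n → 0 < r →
      cHZ (prod N (cyl n r)) = ENNReal.ofReal (Real.pi * r ^ 2)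
  /-- rational homology classes of `M` -/
  Cls : Obj → Type
  /-- the homology class of a point -/
  pt : ∀ M, Cls M
  /-- nonzero homology classes -/
  IsNonzero : ∀ {M : Obj}, Cls M → Prop
  pt_nonzero : ∀ M, IsNonzero (pt M)
  /-- the dimension (degree) of a homology class -/
  cdim : ∀ {M : Obj}, Cls M → ℕ
  /-- degree-two integral homology classes `H₂(M, ℤ)` -/
  H2 : Obj → Type
  H2grp : ∀ M, AddCommGroup (H2 M)
  /-- the symplectic area `ω(A)` of `A ∈ H₂(M, ℤ)` -/
  area : ∀ {M : Obj}, H2 M → ℝ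
  /-- the first Chern number `c₁(A)` -/
  c1 : ∀ {M : Obj}, H2 M → ℤ
  /-- spherical classes (the image of the Hurewicz homomorphism `π₂(M) → H₂(M,ℤ)`) -/
  Spherical : ∀ {M : Obj}, H2 M → Prop
  /-- homology classes of the moduli spaces of stable curves -/
  MCls : Type
  /-- the class of a point in the moduli space -/
  mpt : MCls
  /-- the Liu–Tian type Gromov–Witten invariant `Ψ_{A,g,k}(C; α₁, …, α_k)` -/
  LT : ∀ {M : Obj}, H2 M → (g : ℕ) → (k : ℕ) → MCls → (Fin k → Cls M) → ℚ
  /-- Lu's pseudo symplectic capacity `C_HZ^{(2)}(M, ω; α₁, α₂)` -/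
  CHZ2 : ∀ M : Obj, Cls M → Cls M → ℝ≥0∞
  /-- Lu's pseudo symplectic capacity `C_HZ^{(2o)}(M, ω; α₁, α₂)` -/
  CHZ2o : ∀ M : Obj, Cls M → Cls M → ℝ≥0∞
  CHZ2_le_CHZ2o : ∀ (M : Obj) (a b : Cls M), CHZ2 M a b ≤ CHZ2o M a b
  CHZ2_le_cHZ : ∀ (M : Obj) (a b : Cls M), CHZ2 M a b ≤ cHZ M
  /-- Lu: `c_G(M, ω) ≤ C_HZ^{(2)}(M, ω; pt, α)` for nonzero `α`, `dim α ≤ dim M - 1` -/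
  cG_le_CHZ2 : ∀ (M : Obj) (a : Cls M), IsNonzero a → cdim a ≤ dim M - 1 →
      cG M ≤ CHZ2 M (pt M) a
  /-- Lu: `C_HZ^{(2)}(M, ω; α₁, α₂) ≤ GW(M, ω; α₁, α₂)` for closed `M`, `dim M ≥ 4` -/
  CHZ2_le_GW : ∀ (M : Obj) (a b : Cls M), Closed M → 4 ≤ dim M →
      IsNonzero a → IsNonzero b →
      CHZ2 M a b ≤ sInf {x : ℝ≥0∞ |
        ∃ (A : H2 M) (g m : ℕ) (C : MCls) (β : Fin m → Cls M), 1 ≤ m ∧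
          LT A g (m + 1 + 1) C (Fin.cons a (Fin.cons b β)) ≠ 0 ∧
          x = ENNReal.ofReal (area A)}
  /-- Lu: `C_HZ^{(2o)}(M, ω; α₁, α₂) ≤ GW₀(M, ω; α₁, α₂)` for closed `M`, `dim M ≥ 4` -/
  CHZ2o_le_GW0 : ∀ (M : Obj) (a b : Cls M), Closed M → 4 ≤ dim M →
      IsNonzero a → IsNonzero b →
      CHZ2o M a b ≤ sInf {x : ℝ≥0∞ |
        ∃ (A : H2 M) (m : ℕ) (C : MCls) (β : Fin m → Cls M), 1 ≤ m ∧
          LT A 0 (m + 1 + 1) C (Fin.cons a (Fin.cons b β)) ≠ 0 ∧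
          x = ENNReal.ofReal (area A)}
  /-- irreducible Hermitian symmetric spaces of compact type, with the canonical
  (Kähler) form `ω_FS` normalized so that `ω_FS(A) = π` on the generator `A` of
  `H₂(M, ℤ)` -/
  IsIrredHSSCT : Obj → Prop
  hssct_closed : ∀ {M : Obj}, IsIrredHSSCT M → Closed M
  hssct_dim_pos : ∀ {M : Obj}, IsIrredHSSCT M → 0 < dim M
  /-- the noncompact dual `(Ω, ω₀) ⊆ ℂⁿ` of a HSSCT -/
  dual : Obj → Obj
  dim_dual : ∀ {M : Obj}, IsIrredHSSCT M → dim (dual M) = dim M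
  /-- the symplectic duality embedding `(Ω, ω₀) → (M, ω_FS)` of Di Scala–Loi -/
  dual_emb : ∀ {M : Obj}, IsIrredHSSCT M → emb (dual M) M
  /-- Cartan domains `(Ω, ω₀) ⊆ ℂⁿ = ℝ^{2n}`: irreducible bounded symmetric
  domains in their circled realization, with the standard symplectic form `ω₀` -/
  IsCartan : Obj → Prop
  cartan_dim_pos : ∀ {M : Obj}, IsCartan M → 0 < dim M
  cartan_dual : ∀ {M : Obj}, IsIrredHSSCT M → IsCartan (dual M)
  /-- `B^{2n}(1) ⊆ Ω` (via the spectral norm of the associated Jordan triple system) -/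
  ball_emb_cartan : ∀ {M : Obj}, IsCartan M → emb (ball (dim M) 1) M
  /-- the unitary symplectic embedding `Ω → Z^{2n}(1)` into the unit cylinder -/
  cartan_emb_cyl : ∀ {M : Obj}, IsCartan M → emb M (cyl (dim M) 1)
  /-- the compact dual of a Cartan domain -/
  compactDual : Obj → Obj
  compactDual_hssct : ∀ {M : Obj}, IsCartan M → IsIrredHSSCT (compactDual M)
  /-- symplectic duality: a Cartan domain embeds into its compact dual -/
  compactDual_emb : ∀ {M : Obj}, IsCartan M → emb M (compactDual M)
  /-- Lemma (from the quantum cohomology of HSSCT): every irreducible HSSCT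
  carries a nonvanishing genus-zero three-point Gromov–Witten invariant
  `Ψ_{A,0,3}(pt; α, β, pt) ≠ 0` on the generator `A`, of area `ω_FS(A) = π`
  minimal among the positive areas of classes in `H₂(M, ℤ)` -/
  hssct_GW : ∀ {M : Obj}, IsIrredHSSCT M → ∃ (A : H2 M) (α β : Cls M),
      area A = Real.pi ∧ (∀ B : H2 M, 0 < area B → Real.pi ≤ area B) ∧
      IsNonzero α ∧ IsNonzero β ∧ cdim α ≤ dim M - 1 ∧
      LT A 0 3 mpt ![α, β, pt M] ≠ 0
  /-- consequence of Lu's product formula for Gromov–Witten invariants: for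
  closed `N` and an irreducible HSSCT `M`, the product `(N × M, ω ⊕ aω_FS)`
  carries a nonvanishing genus-zero three-point Gromov–Witten invariant
  `Ψ_{0⊕A,0,3}(pt; [N]×α, [N]×β, pt) ≠ 0` on a class `0 ⊕ A` of area `|a|π` -/
  prod_GW : ∀ {N M : Obj} (a : ℝ), Closed N → IsIrredHSSCT M → a ≠ 0 →
      ∃ (B : H2 (prod N (smul a M))) (α β : Cls (prod N (smul a M))),
        area B = |a| * Real.pi ∧ IsNonzero α ∧ IsNonzero β ∧
        cdim α ≤ dim (prod N (smul a M)) - 1 ∧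
        LT B 0 3 mpt ![α, β, pt (prod N (smul a M))] ≠ 0
  /-- holomorphic line bundles on `M` -/
  Bundle : Obj → Type
  /-- the global Seshadri constant `ε(L) = inf_x inf_{C ∋ x} (∫_C c₁(L)) / mult_x C` -/
  seshadri : ∀ {M : Obj}, Bundle M → ℝ
  /-- for an irreducible HSSCT, the line bundle `L` with `c₁(L) = [ω_FS/π]`
  (the pull-back of the hyperplane bundle under the Borel–Weil embedding) -/
  hssctBundle : ∀ {M : Obj}, IsIrredHSSCT M → Bundle M
  /-- the Biran–Cieliebak inequality `ε(L) ≤ c_G(M, ω_L)` applied to `ω_L = ω_FS/π` -/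
  biran_cieliebak : ∀ {M : Obj} (h : IsIrredHSSCT M),
      ENNReal.ofReal (seshadri (hssctBundle h)) ≤ cG (smul (1 / Real.pi) M)
  /-- the underlying set of points of `M` -/
  carrier : Obj → Type
  /-- subsets of `M` which are images of a symplectic embedding of a bounded
  subset of `(ℝ^{2n}, ω₀)` diffeomorphic to an open ball -/
  BallLike : ∀ {M : Obj}, Set (carrier M) → Prop
  /-- the symplectic Lusternik–Schnirelmann category of Rudyak–Schlenk -/
  SLS : Obj → ℕ∞
  /-- defining property of `S(M, ω)`: a cover by `k` ball-like sets gives `S(M,ω) ≤ k` -/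
  SLS_le : ∀ (M : Obj) (k : ℕ) (U : Fin k → Set (carrier M)),
      (∀ i, BallLike (U i)) → (⋃ i, U i) = Set.univ → SLS M ≤ (k : ℕ∞)
  /-- Hermitian symmetric spaces of compact type (not necessarily irreducible) -/
  IsHSSCT : Obj → Prop
  irred_isHSSCT : ∀ {M : Obj}, IsIrredHSSCT M → IsHSSCT M
  /-- `BorelWeil M N`: the Borel–Weil embedding realizes `M` as a Kähler
  submanifold of `ℂP^N` -/
  BorelWeil : Obj → ℕ → Prop
  /-- the `N+1` affine charts of the Borel–Weil embedding cover `M`, and each of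
  them — the image of the noncompact dual under the symplectic duality map — is
  the image of a symplectic embedding of a bounded ball-like domain -/
  borelWeil_charts : ∀ {M : Obj} {N : ℕ}, IsHSSCT M → BorelWeil M N →
      ∃ U : Fin (N + 1) → Set (carrier M),
        (∀ i, BallLike (U i)) ∧ (⋃ i, U i) = Set.univ

attribute [instance] SympGeom.H2grp

/-- `GW_g(M, ω; α₁, α₂)`: the infimum of the areas `ω(A)` of classes
`A ∈ H₂(M, ℤ)` carrying a nonvanishing genus-`g` Liu–Tian Gromov–Witten
invariant `Ψ_{A,g,m+2}(C; α₁, α₂, β₁, …, β_m) ≠ 0` (with `inf ∅ = +∞`). -/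
def SympGeom.GWg (F : SympGeom) (M : F.Obj) (g : ℕ) (a b : F.Cls M) : ℝ≥0∞ :=
  sInf {x : ℝ≥0∞ |
    ∃ (A : F.H2 M) (m : ℕ) (C : F.MCls) (β : Fin m → F.Cls M), 1 ≤ m ∧
      F.LT A g (m + 1 + 1) C (Fin.cons a (Fin.cons b β)) ≠ 0 ∧
      x = ENNReal.ofReal (F.area A)}

/-- `GW(M, ω; α₁, α₂) = inf {GW_g(M, ω; α₁, α₂) | g ≥ 0}`. -/
def SympGeom.GW (F : SympGeom) (M : F.Obj) (a b : F.Cls M) : ℝ≥0∞ :=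
  ⨅ g : ℕ, F.GWg M g a b

/-- `GW₀(M, ω; α₁, α₂)`, the genus-zero invariant capacity. -/
def SympGeom.GW0 (F : SympGeom) (M : F.Obj) (a b : F.Cls M) : ℝ≥0∞ :=
  F.GWg M 0 a b

/-- superadditivity of `cHZ` over finite products of closed manifolds -/
lemma SympGeom.sum_cHZ_le_bprod (F : SympGeom) : ∀ {r : ℕ} (f : Fin r → F.Obj),
    (∀ i, F.Closed (f i)) → ∑ i, F.cHZ (f i) ≤ F.cHZ (F.bprod f) := by
  intro r
  induction r with
  | zero => intro f hf; simp
  | succ n ih =>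
      intro f hf
      rw [F.bprod_succ f, Fin.sum_univ_castSucc]
      calc (∑ i : Fin n, F.cHZ (f i.castSucc)) + F.cHZ (f (Fin.last n))
          ≤ F.cHZ (F.bprod (Fin.init f)) + F.cHZ (f (Fin.last n)) := by
            gcongr
            exact ih (Fin.init f) (fun i => hf _)
        _ ≤ _ := F.cHZ_superadd (F.closed_bprod fun i => hf _) (hf _)

theorem cHZ_weighted_prod_ge (F : SympGeom) (r : ℕ) (hr : 0 < r)
    (M : Fin r → F.Obj) (h : ∀ i, F.IsIrredHSSCT (M i))
    (a : Fin r → ℝ) (ha : ∀ i, a i ≠ 0) :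
    ENNReal.ofReal ((∑ i, |a i|) * Real.pi) ≤
      F.cHZ (F.bprod fun i => F.smul (a i) (M i)) := by
  have key : ∀ i, ENNReal.ofReal (|a i| * Real.pi) ≤ F.cHZ (F.smul (a i) (M i)) := by
    intro i
    have hπ : ENNReal.ofReal Real.pi ≤ F.cHZ (M i) := by
      have h1 : F.emb (F.ball (F.dim (M i)) 1) (M i) := by
        have := F.ball_emb_cartan (F.cartan_dual (h i))
        rw [F.dim_dual (h i)] at this
        exact F.emb_trans this (F.dual_emb (h i))
      have h2 := F.cHZ_mono h1
      rw [F.cHZ_ball _ 1 (F.hssct_dim_pos (h i)) one_pos] at h2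
      simpa using h2
    rw [F.cHZ_conf (a i) (ha i), ENNReal.ofReal_mul (abs_nonneg _)]
    exact mul_le_mul_right hπ _
  calc ENNReal.ofReal ((∑ i, |a i|) * Real.pi)
      = ∑ i, ENNReal.ofReal (|a i| * Real.pi) := by
        rw [Finset.sum_mul, ENNReal.ofReal_sum_of_nonneg]
        intro i _
        exact mul_nonneg (abs_nonneg _) Real.pi_pos.le
    _ ≤ ∑ i, F.cHZ (F.smul (a i) (M i)) := Finset.sum_le_sum fun i _ => key i
    _ ≤ _ := F.sum_cHZ_le_bprod _ fun i => F.closed_smul _ (ha i) (F.hssct_closed (h i))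
end
end

section
/- Let (Ω, ω₀) be a Cartan domain of complex dimension n and (N, ω) any closed symplectic manifold. Then c_HZ(N × Ω, ω ⊕ ω₀) = π. -/
/-!
STATEMENT 14.  Let `(Ω, ω₀)` be a Cartan domain and `(N, ω)` any closed
symplectic manifold.  Then `c_HZ(N × Ω, ω ⊕ ω₀) = π`.
-/

noncomputable section

open scoped ENNReal BigOperators

theorem cHZ_prod_cartan (F : SympGeom) (N Ω : F.Obj)
    (hN : F.Closed N) (hΩ : F.IsCartan Ω) :
    F.cHZ (F.prod N Ω) = ENNReal.ofReal Real.pi := by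
  have hd := F.cartan_dim_pos hΩ
  have h1 : F.cHZ (F.prod N (F.ball (F.dim Ω) 1)) ≤ F.cHZ (F.prod N Ω) :=
    F.cHZ_mono (F.prod_emb (F.emb_rfl N) (F.ball_emb_cartan hΩ))
  have h2 : F.cHZ (F.prod N Ω) ≤ F.cHZ (F.prod N (F.cyl (F.dim Ω) 1)) :=
    F.cHZ_mono (F.prod_emb (F.emb_rfl N) (F.cartan_emb_cyl hΩ))
  rw [F.cHZ_prod_ball (F.dim Ω) 1 hN hd one_pos] at h1
  rw [F.cHZ_prod_cyl (F.dim Ω) 1 hN hd one_pos] at h2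
  simpa using le_antisymm h2 h1
end
end
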